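/- Let G = (V, E) be an ordered Θ_k-graph with k ≥ 2 on n vertices, and let s ∈ V be any source vertex and t ∈ V any destination vertex. Then: (1) the descending walk of A^down starting at s is well-defined and reaches v₁ in at most n − 1 hops; (2) the state sequence of A^up(v₁, t) is well-defined until reaching t, and there exists m ≤ 2n such that its current vertex after m steps equals t. Consequently, the two-phase algorithm A(s, t) — first A^down(s), then A^up(v₁, t) — routes from s to t in at most 3n hops. -/

import Mathlib

/-!
Ordered Θ_k-graphs: common definitions.

Points live in the plane, modelled as `ℂ`.  For a point `u`, the plane is
partitioned into `k` cones of aperture `θ = 2π/k`; cone `j` has as bisector the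
ray from `u` in direction `exp((π/2 - j·θ)·I)` (cone `0` points upwards, cones
are numbered clockwise).  A point `w ≠ u` lies (in the interior of) cone `j` of
`u` iff the angle between `w - u` and the bisector is `< θ/2`.  `projDist`
measures the length of the orthogonal projection of `w - u` onto the bisector
of cone `j`.  Insertion orders: vertex `i : Fin n` is the `(i+1)`-st inserted
vertex, so `ρ(v) < ρ(u)` is `v < u`.
-/

namespace OrderedTheta

noncomputable def theta (k : ℕ) : ℝ := 2 * Real.pi / k

/-- Unit vector along the bisector of the `j`-th cone. -/
noncomputable def dir (k j : ℕ) : ℂ :=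
  Complex.exp ((Real.pi / 2 - j * theta k) * Complex.I)

/-- `w` lies in the (open) cone number `j` of apex `u`. -/
def inCone (k : ℕ) (u w : ℂ) (j : ℕ) : Prop :=
  w ≠ u ∧ |Complex.arg ((w - u) / dir k j)| < theta k / 2

/-- The distance `|u w'|` from `u` to the orthogonal projection `w'` of `w`
onto the bisector of cone `j` of `u` (for `w` in the open cone `j` this equals
the signed component of `w - u` along the bisector direction). -/
noncomputable def projDist (k : ℕ) (u w : ℂ) (j : ℕ) : ℝ :=
  ((w - u) * (starRingEnd ℂ) (dir k j)).re

/-- A sequence of `n` distinct points in the plane, in general position, to be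
inserted in the order of their indices; `V i` is the `(i+1)`-st inserted point. -/
structure Config (k n : ℕ) : Type where
  two_le_k : 2 ≤ k
  V : Fin n → ℂ
  inj : Function.Injective V
  /-- no previously inserted point lies on a boundary ray of a cone of `V i`:
  every earlier point lies in the open cone of some index `c < k`. -/
  gp_cone : ∀ i j : Fin n, j < i → ∃ c < k, inCone k (V i) (V j) c
  /-- two distinct earlier points lying in a common cone of `V i` have distinct
  bisector-projection distances from `V i`. -/
  gp_dist : ∀ i j l : Fin n, j < i → l < i → j ≠ l →
    ∀ c < k, inCone k (V i) (V j) c → inCone k (V i) (V l) c →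
      projDist k (V i) (V j) c ≠ projDist k (V i) (V l) c

/-- The edge created upon insertion of `i`, towards the earlier point `j`:
`j` is inserted before `i`, and among all earlier points in the cone of `i`
containing `j`, `j` is closest (measured along the bisector). -/
def EdgeDir {k n : ℕ} (C : Config k n) (i j : Fin n) : Prop :=
  j < i ∧ ∃ c < k, inCone k (C.V i) (C.V j) c ∧
    ∀ l : Fin n, l < i → inCone k (C.V i) (C.V l) c →
      projDist k (C.V i) (C.V j) c ≤ projDist k (C.V i) (C.V l) c

/-- The ordered Θ_k-graph of a configuration, as an undirected simple graph on
`Fin n`. -/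
def graph {k n : ℕ} (C : Config k n) : SimpleGraph (Fin n) where
  Adj i j := EdgeDir C i j ∨ EdgeDir C j i
  symm := ⟨fun _ _ hij => hij.symm⟩
  loopless := by
    refine ⟨?_⟩
    intro i h
    rcases h with h | h <;> exact absurd h.1 (lt_irrefl i)

/-- `x` lies in the canonical triangle `Δ u w`: `x` lies in the cone of `u`
containing `w` and its projection onto the bisector is at distance at most
`|u w'|` from `u`. -/
def inCanonical (k : ℕ) (u w x : ℂ) : Prop :=
  ∃ c < k, inCone k u w c ∧ inCone k u x c ∧ projDist k u x c ≤ projDist k u w c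

/-- `v` is the target of an ordered Θ-routing step from `u` towards the first
inserted vertex `v₁`: it is `v₁` itself if `{u, v₁}` is an edge, and otherwise
the neighbour of `u` of smaller insertion order lying in the canonical triangle
`Δ u v₁` whose bisector projection is closest to `u`. -/
def IsRoutingStep {k n : ℕ} (C : Config k n) (hn : 0 < n) (u v : Fin n) : Prop :=
  ((graph C).Adj u ⟨0, hn⟩ ∧ v = ⟨0, hn⟩) ∨
  (¬ (graph C).Adj u ⟨0, hn⟩ ∧ (graph C).Adj u v ∧ v < u ∧
    inCanonical k (C.V u) (C.V ⟨0, hn⟩) (C.V v) ∧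
    ∀ w : Fin n, (graph C).Adj u w → w < u →
      inCanonical k (C.V u) (C.V ⟨0, hn⟩) (C.V w) →
      ∀ c < k, inCone k (C.V u) (C.V v) c → inCone k (C.V u) (C.V w) c →
        projDist k (C.V u) (C.V v) c ≤ projDist k (C.V u) (C.V w) c)

/-- `u'` is an exploration candidate neighbour of `u` (with respect to the
destination `t`): `u'` is a neighbour of `u` with `ρ(u) < ρ(u') ≤ ρ(t)` such
that `u` lies in the interior of the cone of `u'` containing `v₁`. -/
def ExplCand {k n : ℕ} (C : Config k n) (hn : 0 < n) (t u u' : Fin n) : Prop :=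
  (graph C).Adj u u' ∧ u < u' ∧ u' ≤ t ∧
  ∃ c < k, inCone k (C.V u') (C.V ⟨0, hn⟩) c ∧ inCone k (C.V u') (C.V u) c

/-- The exploration space `S(v₁)`: the smallest set of vertices containing `v₁`
and closed under taking exploration candidate neighbours. -/
inductive InExplSpace {k n : ℕ} (C : Config k n) (hn : 0 < n) (t : Fin n) : Fin n → Prop
  | base : InExplSpace C hn t ⟨0, hn⟩
  | step {u u' : Fin n} :
      InExplSpace C hn t u → ExplCand C hn t u u' → InExplSpace C hn t u'

/-- The label of a vertex: its coordinates together with its insertion order. -/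
noncomputable def label {k n : ℕ} (C : Config k n) (v : Fin n) : ℂ × ℕ :=
  (C.V v, (v : ℕ) + 1)

/-- The vertices at graph distance at most `h` from `u`. -/
def ball {k n : ℕ} (C : Config k n) (u : Fin n) (h : ℕ) : Set (Fin n) :=
  {v | ∃ p : (graph C).Walk u v, p.length ≤ h}

/-- The data visible to an `h`-local algorithm: a labelled vertex set together
with a labelled edge set. -/
abbrev LocalView : Type := Set (ℂ × ℕ) × Set ((ℂ × ℕ) × (ℂ × ℕ))

/-- The `h`-neighbourhood `B_h(u)`: the induced labelled subgraph on all
vertices at graph distance at most `h` from `u`. -/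
noncomputable def view {k n : ℕ} (C : Config k n) (u : Fin n) (h : ℕ) : LocalView :=
  (label C '' ball C u h,
   {e | ∃ a ∈ ball C u h, ∃ b ∈ ball C u h,
      (graph C).Adj a b ∧ e = (label C a, label C b)})

/-- One step of the descending algorithm `A^down`: move to the neighbour of
minimum insertion order among the neighbours of smaller insertion order. -/
def AdownStep {k n : ℕ} (C : Config k n) (u v : Fin n) : Prop :=
  (graph C).Adj u v ∧ v < u ∧ ∀ v' : Fin n, (graph C).Adj u v' → v' < u → v ≤ v'

/-- The angle of the vector `v - u`, measured counterclockwise from the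
positive horizontal direction, normalised to `[0, 2π)`. -/
noncomputable def alpha (u v : ℂ) : ℝ :=
  if 0 ≤ Complex.arg (v - u) then Complex.arg (v - u)
  else Complex.arg (v - u) + 2 * Real.pi

/-- One step of the algorithm `A^up(v₁, t)` on states
`(current vertex, previous vertex, exploration bit)`. -/
def AupStep {k n : ℕ} (C : Config k n) (hn : 0 < n) (t : Fin n)
    (s s' : Fin n × Option (Fin n) × Bool) : Prop :=
  s.1 ≠ t ∧
  ((s.2.2 = true ∧
     ((∃ v : Fin n, ExplCand C hn t s.1 v ∧
         (∀ v' : Fin n, ExplCand C hn t s.1 v' →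
           alpha (C.V s.1) (C.V v) ≤ alpha (C.V s.1) (C.V v')) ∧
         s' = (v, some s.1, true)) ∨
      ((¬ ∃ v : Fin n, ExplCand C hn t s.1 v) ∧
        ∃ u' : Fin n, IsRoutingStep C hn s.1 u' ∧ s' = (u', some s.1, false)))) ∨
   (s.2.2 = false ∧ ∃ p : Fin n, s.2.1 = some p ∧
     ((∃ v : Fin n,
         (ExplCand C hn t s.1 v ∧ alpha (C.V s.1) (C.V p) < alpha (C.V s.1) (C.V v)) ∧
         (∀ v' : Fin n, ExplCand C hn t s.1 v' →
           alpha (C.V s.1) (C.V p) < alpha (C.V s.1) (C.V v') →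
           alpha (C.V s.1) (C.V v) ≤ alpha (C.V s.1) (C.V v')) ∧
         s' = (v, some s.1, true)) ∨
      ((¬ ∃ v : Fin n, ExplCand C hn t s.1 v ∧
          alpha (C.V s.1) (C.V p) < alpha (C.V s.1) (C.V v)) ∧
        ∃ u' : Fin n, IsRoutingStep C hn s.1 u' ∧ s' = (u', some s.1, false)))))

/-- The point sequence defining `L_h^k` (0-based index `j` is the `(j+1)`-st
inserted point `v_{j+1}`). -/
noncomputable def Lpt (h k : ℕ) (ε : ℝ) (j : ℕ) : ℂ :=
  if j = 0 then 0
  else if j = 2 * h + 1 then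
    ((-2 : ℝ) : ℂ) + ((-(2 * (h : ℝ)) * ε : ℝ) : ℂ) * Complex.I
  else if j = 2 * h + 2 then
    ((-2 / Real.tan (theta k / 2) - 3 * (h : ℝ) * ε : ℝ) : ℂ) * Complex.I
  else if j % 2 = 1 then
    (((((j + 1) / 2 : ℕ) : ℝ) / (h : ℝ) : ℝ) + ((-(((j + 1) / 2 : ℕ) : ℝ) * ε : ℝ) : ℂ) * Complex.I)
  else
    ((-(((j / 2 : ℕ) : ℝ) / (h : ℝ)) : ℝ) + ((-(((j / 2 : ℕ) : ℝ)) * ε : ℝ) : ℂ) * Complex.I)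

/-- The point sequence defining `R_h^k`: identical to the one for `L_h^k`
except that `v_{2h+2}` is placed at `(2, -2hε)` instead of `(-2, -2hε)`. -/
noncomputable def Rpt (h k : ℕ) (ε : ℝ) (j : ℕ) : ℂ :=
  if j = 2 * h + 1 then ((2 : ℝ) : ℂ) + ((-(2 * (h : ℝ)) * ε : ℝ) : ℂ) * Complex.I
  else Lpt h k ε j

/-!
The routing-step targets form a tree rooted at `v₁`: the target of `u ≠ v₁` is the nearest
(along the bisector) earlier point in the cone of `u` containing `v₁`, which general position
makes unique and which is adjacent to `u`. The exploration candidates of `u` are exactly its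
children in this tree not inserted after `t`, so `A^up` is a depth-first traversal of the tree,
visiting children in increasing angle and returning by routing steps. A complete tour of the
subtree of `u` takes fewer than `2 |subtree u|` steps, subtrees of distinct children being
disjoint; the walk from `v₁` descends into the child whose subtree contains `t` after touring
the earlier ones, so it reaches `t` in fewer than `2n` steps. `A^down` strictly decreases the
insertion order, so it reaches `v₁` after at most `ρ(s) - 1` steps.
-/

open Finset

def RelPath {α : Type*} (R : α → α → Prop) (m : ℕ) (a b : α) : Prop :=
  ∃ σ : ℕ → α, σ 0 = a ∧ σ m = b ∧ ∀ i < m, R (σ i) (σ (i + 1))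

namespace RelPath

variable {α : Type*} {R : α → α → Prop} {a b c : α} {m m' : ℕ}

lemma refl (a : α) : RelPath R 0 a a :=
  ⟨fun _ => a, rfl, rfl, fun _ h => absurd h (Nat.not_lt_zero _)⟩

lemma single (h : R a b) : RelPath R 1 a b :=
  ⟨fun i => if i = 0 then a else b, rfl, rfl, fun i hi => by
    obtain rfl : i = 0 := by omega
    simpa using h⟩

lemma trans (h₁ : RelPath R m a b) (h₂ : RelPath R m' b c) : RelPath R (m + m') a c := by
  obtain ⟨σ, hσ0, hσm, hσ⟩ := h₁
  obtain ⟨τ, hτ0, hτm, hτ⟩ := h₂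
  refine ⟨fun i => if i ≤ m then σ i else τ (i - m), by simp [hσ0], ?_, fun i hi => ?_⟩
  · rcases Nat.eq_zero_or_pos m' with rfl | hm'
    · simp only [add_zero, le_refl, if_true]
      rw [hσm, ← hτ0, hτm]
    · simp [show ¬ m + m' ≤ m by omega, hτm]
  rcases lt_or_ge i m with him | hmi
  · simpa [him.le, Nat.succ_le_of_lt him] using hσ i him
  · have := hτ (i - m) (by omega)
    rcases hmi.eq_or_lt with rfl | hmi
    · simpa [hσm, ← hτ0] using this
    · simpa [hmi.not_ge, show ¬ i + 1 ≤ m by omega, show i + 1 - m = i - m + 1 by omega]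
        using this

end RelPath

lemma coe_arg_exp_mul_I (r : ℝ) : ((Complex.exp (r * Complex.I)).arg : Real.Angle) = r := by
  rw [Complex.arg_exp_mul_I, Real.Angle.coe_toIocMod]

lemma dir_div_dir (k c c' : ℕ) :
    dir k c' / dir k c = Complex.exp ((((c : ℝ) - c') * theta k : ℝ) * Complex.I) := by
  rw [dir, dir, ← Complex.exp_sub]
  push_cast
  ring_nf

theorem inCone_unique {k : ℕ} {u w : ℂ} {c c' : ℕ} (hc : c < k) (hc' : c' < k)
    (h : inCone k u w c) (h' : inCone k u w c') : c = c' := by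
  have hk : 0 < k := Nat.zero_lt_of_lt hc
  have hθ : 0 < theta k := by unfold theta; positivity
  have hz : (w - u) / dir k c' ≠ 0 := div_ne_zero (sub_ne_zero.mpr h.1) (Complex.exp_ne_zero _)
  have hrot : (w - u) / dir k c = (w - u) / dir k c' * (dir k c' / dir k c) := by
    field_simp [Complex.exp_ne_zero, dir]
  rw [dir_div_dir] at hrot
  have hangle : (((w - u) / dir k c).arg : Real.Angle)
      = (((w - u) / dir k c').arg + ((c : ℝ) - c') * theta k : ℝ) := by
    rw [hrot, Complex.arg_mul_coe_angle hz (Complex.exp_ne_zero _), coe_arg_exp_mul_I,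
      Real.Angle.coe_add]
  obtain ⟨m, hm⟩ := Real.Angle.angle_eq_iff_two_pi_dvd_sub.mp hangle
  have h2π : 2 * Real.pi = k * theta k := by unfold theta; field_simp
  -- the two arguments differ by `(c - c' + k m) θ`, yet by less than `θ`
  have hdiff : ((w - u) / dir k c).arg - ((w - u) / dir k c').arg
      = (((c : ℤ) - c' + k * m : ℤ) : ℝ) * theta k := by
    push_cast
    linear_combination hm + m * h2π
  have hsmall : |(((c : ℤ) - c' + k * m : ℤ) : ℝ)| * theta k < 1 * theta k := by
    rw [← abs_of_pos hθ, ← abs_mul, abs_of_pos hθ, ← hdiff, one_mul]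
    exact abs_sub_lt_iff.mpr ⟨by linarith [(abs_lt.mp h.2).2, (abs_lt.mp h'.2).1],
      by linarith [(abs_lt.mp h.2).1, (abs_lt.mp h'.2).2]⟩
  have hint : (c : ℤ) - c' + k * m = 0 :=
    Int.abs_lt_one_iff.mp (by exact_mod_cast lt_of_mul_lt_mul_right hsmall hθ.le)
  have : (c : ℤ) - c' = 0 :=
    Int.eq_zero_of_abs_lt_dvd (m := k) ⟨-m, by linarith⟩
      (abs_sub_lt_iff.mpr ⟨by omega, by omega⟩)
  omega

section RoutingTree

variable {k n : ℕ} (C : Config k n) (hn : 0 < n)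

def v₁ : Fin n := ⟨0, hn⟩

lemma v₁_le (u : Fin n) : v₁ hn ≤ u := Nat.zero_le _

def IsParent (u v : Fin n) : Prop :=
  v < u ∧ ∃ c < k, inCone k (C.V u) (C.V (v₁ hn)) c ∧ inCone k (C.V u) (C.V v) c ∧
    ∀ l < u, inCone k (C.V u) (C.V l) c →
      projDist k (C.V u) (C.V v) c ≤ projDist k (C.V u) (C.V l) c

variable {C hn}

lemma exists_isParent {u : Fin n} (hu : v₁ hn < u) : ∃ v, IsParent C hn u v := by
  obtain ⟨c, hck, hc⟩ := C.gp_cone u (v₁ hn) hu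
  obtain ⟨v, ⟨hvu, hvc⟩, hmin⟩ := Set.exists_min_image
    {l | l < u ∧ inCone k (C.V u) (C.V l) c} (fun l => projDist k (C.V u) (C.V l) c)
    (Set.toFinite _) ⟨v₁ hn, hu, hc⟩
  exact ⟨v, hvu, c, hck, hc, hvc, fun l hl hlc => hmin l ⟨hl, hlc⟩⟩

lemma IsParent.unique {u v v' : Fin n} (h : IsParent C hn u v) (h' : IsParent C hn u v') :
    v = v' := by
  obtain ⟨hv, c, hck, hc, hcv, hmin⟩ := h
  obtain ⟨hv', c', hck', hc', hcv', hmin'⟩ := h'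
  obtain rfl := inCone_unique hck hck' hc hc'
  by_contra hne
  exact C.gp_dist u v v' hv hv' hne c hck hcv hcv' (le_antisymm (hmin v' hv' hcv') (hmin' v hv hcv))

variable (C hn)

noncomputable def parent (u : Fin n) : Fin n :=
  if h : v₁ hn < u then (exists_isParent (C := C) h).choose else u

variable {C hn}

lemma isParent_parent {u : Fin n} (hu : v₁ hn < u) : IsParent C hn u (parent C hn u) := by
  rw [parent, dif_pos hu]
  exact (exists_isParent hu).choose_spec

lemma parent_lt {u : Fin n} (hu : v₁ hn < u) : parent C hn u < u := (isParent_parent hu).1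

lemma parent_v₁ : parent C hn (v₁ hn) = v₁ hn := dif_neg (lt_irrefl _)

lemma parent_le (u : Fin n) : parent C hn u ≤ u := by
  rcases (v₁_le hn u).lt_or_eq with hu | rfl
  · exact (parent_lt hu).le
  · exact parent_v₁.le

lemma adj_parent {u : Fin n} (hu : v₁ hn < u) : (graph C).Adj u (parent C hn u) := by
  obtain ⟨hlt, c, hck, -, hc, hmin⟩ := isParent_parent (C := C) hu
  exact Or.inl ⟨hlt, c, hck, hc, hmin⟩

lemma isRoutingStep_parent {u : Fin n} (hu : v₁ hn < u) :
    IsRoutingStep C hn u (parent C hn u) := by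
  by_cases hadj : (graph C).Adj u (v₁ hn)
  · refine Or.inl ⟨hadj, (isParent_parent hu).unique ?_⟩
    obtain ⟨hlt, c, hck, hc, hmin⟩ : EdgeDir C u (v₁ hn) :=
      hadj.resolve_right fun h => (v₁_le hn u).not_gt h.1
    exact ⟨hlt, c, hck, hc, hc, hmin⟩
  · obtain ⟨hlt, c, hck, hc, hcv, hmin⟩ := isParent_parent (C := C) hu
    refine Or.inr ⟨hadj, adj_parent hu, hlt, ⟨c, hck, hc, hcv, hmin _ hu hc⟩, ?_⟩
    intro w _ hwu _ c' hck' hcv' hcw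
    obtain rfl := inCone_unique hck' hck hcv' hcv
    exact hmin w hwu hcw

lemma explCand_iff {t u v : Fin n} :
    ExplCand C hn t u v ↔ v₁ hn < v ∧ v ≤ t ∧ parent C hn v = u := by
  constructor
  · rintro ⟨hadj, huv, hvt, c, hck, hc, hcu⟩
    have hv : v₁ hn < v := (v₁_le hn u).trans_lt huv
    obtain ⟨-, c', hck', hcu', hmin⟩ : EdgeDir C v u :=
      hadj.resolve_left fun h => h.1.not_gt huv
    obtain rfl := inCone_unique hck' hck hcu' hcu
    exact ⟨hv, hvt, ((isParent_parent hv).unique ⟨huv, c', hck', hc, hcu', hmin⟩)⟩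
  · rintro ⟨hv, hvt, rfl⟩
    obtain ⟨hlt, c, hck, hc, hcv, hmin⟩ := isParent_parent (C := C) hv
    exact ⟨Or.inr ⟨hlt, c, hck, hcv, hmin⟩, hlt, hvt, c, hck, hc, hcv⟩

variable (C hn)

open Classical in
noncomputable def subtree (u : Fin n) : Finset (Fin n) :=
  Finset.univ.filter fun w => ∃ j, (parent C hn)^[j] w = u

variable {C hn}

lemma mem_subtree {u w : Fin n} : w ∈ subtree C hn u ↔ ∃ j, (parent C hn)^[j] w = u := by
  simp [subtree]

lemma mem_subtree_self (u : Fin n) : u ∈ subtree C hn u := mem_subtree.mpr ⟨0, rfl⟩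

lemma parent_iterate_le (j : ℕ) (w : Fin n) : (parent C hn)^[j] w ≤ w := by
  induction j with
  | zero => exact le_rfl
  | succ j ih =>
    rw [Function.iterate_succ_apply']
    exact (parent_le _).trans ih

lemma le_of_mem_subtree {u w : Fin n} (h : w ∈ subtree C hn u) : u ≤ w := by
  obtain ⟨j, rfl⟩ := mem_subtree.mp h
  exact parent_iterate_le j w

lemma subtree_subset_subtree_parent (x : Fin n) :
    subtree C hn x ⊆ subtree C hn (parent C hn x) := by
  intro w hw
  obtain ⟨j, hj⟩ := mem_subtree.mp hw
  exact mem_subtree.mpr ⟨j + 1, by rw [Function.iterate_succ_apply', hj]⟩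

lemma mem_subtree_v₁ (w : Fin n) : w ∈ subtree C hn (v₁ hn) := by
  induction w using WellFoundedLT.induction with
  | ind w ih =>
    rcases (v₁_le hn w).lt_or_eq with hw | rfl
    · obtain ⟨j, hj⟩ := mem_subtree.mp (ih _ (parent_lt (C := C) hw))
      exact mem_subtree.mpr ⟨j + 1, hj⟩
    · exact mem_subtree_self _

lemma parent_iterate_le_parent_iterate {w : Fin n} {i j : ℕ} (hij : i < j) :
    (parent C hn)^[j] w ≤ parent C hn ((parent C hn)^[i] w) := by
  obtain ⟨d, rfl⟩ := Nat.exists_eq_add_of_lt hij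
  rw [show i + d + 1 = d + (i + 1) by omega, Function.iterate_add_apply,
    Function.iterate_succ_apply']
  exact parent_iterate_le d _

lemma disjoint_subtree {x y : Fin n} (hx : v₁ hn < x) (hy : v₁ hn < y)
    (hxy : parent C hn x = parent C hn y) (hne : x ≠ y) :
    Disjoint (subtree C hn x) (subtree C hn y) := by
  refine Finset.disjoint_left.mpr fun w hwx hwy => ?_
  obtain ⟨i, rfl⟩ := mem_subtree.mp hwx
  obtain ⟨j, rfl⟩ := mem_subtree.mp hwy
  rcases lt_trichotomy i j with hij | rfl | hji
  · exact (parent_iterate_le_parent_iterate hij).not_gt (hxy ▸ parent_lt hy)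
  · exact hne rfl
  · exact (parent_iterate_le_parent_iterate hji).not_gt (hxy ▸ parent_lt hx)

lemma sum_card_subtree_lt {u : Fin n} (S : Finset (Fin n))
    (hS : ∀ x ∈ S, v₁ hn < x ∧ parent C hn x = u) :
    ∑ x ∈ S, #(subtree C hn x) < #(subtree C hn u) := by
  classical
  rw [← card_biUnion fun x hx y hy hne =>
    disjoint_subtree (hS x hx).1 (hS y hy).1 ((hS x hx).2.trans (hS y hy).2.symm) hne]
  refine card_lt_card ((ssubset_iff_of_subset ?_).mpr ⟨u, mem_subtree_self u, ?_⟩)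
  · exact biUnion_subset.mpr fun x hx => (hS x hx).2 ▸ subtree_subset_subtree_parent x
  · simp only [mem_biUnion, not_exists, not_and]
    intro x hx hux
    exact (le_of_mem_subtree hux).not_gt ((hS x hx).2 ▸ parent_lt (hS x hx).1)

lemma card_subtree_lt_parent {x : Fin n} (hx : v₁ hn < x) :
    #(subtree C hn x) < #(subtree C hn (parent C hn x)) := by
  simpa using sum_card_subtree_lt {x} (by simp [hx])

lemma exists_child_mem_subtree {u w : Fin n} (h : w ∈ subtree C hn u) (hne : w ≠ u) :
    ∃ x, v₁ hn < x ∧ parent C hn x = u ∧ w ∈ subtree C hn x := by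
  classical
  -- `x` is the vertex just before the route from `w` first reaches `u`
  have hex := mem_subtree.mp h
  obtain ⟨i, hi⟩ : ∃ i, Nat.find hex = i + 1 :=
    Nat.exists_eq_succ_of_ne_zero fun h0 => hne (by simpa [h0] using Nat.find_spec hex)
  have hpar : parent C hn ((parent C hn)^[i] w) = u := by
    rw [← Function.iterate_succ_apply' (parent C hn), Nat.succ_eq_add_one, ← hi,
      Nat.find_spec hex]
  have hxu : (parent C hn)^[i] w ≠ u := Nat.find_min hex (by omega)
  refine ⟨_, (v₁_le hn _).lt_of_ne fun h => hxu ?_, hpar, mem_subtree.mpr ⟨i, rfl⟩⟩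
  rw [← hpar, ← h, parent_v₁]

end RoutingTree

lemma alpha_lt_two_pi (u v : ℂ) : alpha u v < 2 * Real.pi := by
  unfold alpha
  split_ifs with h
  · linarith [Complex.arg_le_pi (v - u), Real.pi_pos]
  · linarith

section Ascent

variable {k n : ℕ} {C : Config k n} {hn : 0 < n} {t : Fin n}

lemma aupStep_explore_first {u v : Fin n} {p : Option (Fin n)} (hut : u ≠ t)
    (hv : ExplCand C hn t u v)
    (hmin : ∀ v', ExplCand C hn t u v' → alpha (C.V u) (C.V v) ≤ alpha (C.V u) (C.V v')) :
    AupStep C hn t (u, p, true) (v, some u, true) :=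
  ⟨hut, Or.inl ⟨rfl, Or.inl ⟨v, hv, hmin, rfl⟩⟩⟩

lemma aupStep_route_of_no_cand {u : Fin n} {p : Option (Fin n)} (hut : u ≠ t)
    (hu : v₁ hn < u) (hno : ∀ v, ¬ ExplCand C hn t u v) :
    AupStep C hn t (u, p, true) (parent C hn u, some u, false) :=
  ⟨hut, Or.inl ⟨rfl, Or.inr ⟨not_exists.mpr hno, _, isRoutingStep_parent hu, rfl⟩⟩⟩

lemma aupStep_explore_next {u q v : Fin n} (hut : u ≠ t) (hv : ExplCand C hn t u v)
    (hqv : alpha (C.V u) (C.V q) < alpha (C.V u) (C.V v))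
    (hmin : ∀ v', ExplCand C hn t u v' → alpha (C.V u) (C.V q) < alpha (C.V u) (C.V v') →
      alpha (C.V u) (C.V v) ≤ alpha (C.V u) (C.V v')) :
    AupStep C hn t (u, some q, false) (v, some u, true) :=
  ⟨hut, Or.inr ⟨rfl, q, rfl, Or.inl ⟨v, ⟨hv, hqv⟩, hmin, rfl⟩⟩⟩

lemma aupStep_route_of_no_next {u q : Fin n} (hut : u ≠ t) (hu : v₁ hn < u)
    (hno : ∀ v, ExplCand C hn t u v → alpha (C.V u) (C.V v) ≤ alpha (C.V u) (C.V q)) :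
    AupStep C hn t (u, some q, false) (parent C hn u, some u, false) :=
  ⟨hut, Or.inr ⟨rfl, q, rfl, Or.inr ⟨fun ⟨v, hv, hlt⟩ => (hno v hv).not_gt hlt, _,
    isRoutingStep_parent hu, rfl⟩⟩⟩

variable (C) in
lemma exists_min_alpha (u : Fin n) {P : Fin n → Prop} (hP : ∃ v, P v) :
    ∃ c, P c ∧ ∀ c', P c' → alpha (C.V u) (C.V c) ≤ alpha (C.V u) (C.V c') :=
  Set.exists_min_image {c | P c} _ (Set.toFinite _) hP

variable (C hn t) in
open Classical in
noncomputable def candsIn (u : Fin n) (a b : ℝ) : Finset (Fin n) :=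
  Finset.univ.filter fun x =>
    ExplCand C hn t u x ∧ a ≤ alpha (C.V u) (C.V x) ∧ alpha (C.V u) (C.V x) < b

lemma mem_candsIn {u x : Fin n} {a b : ℝ} :
    x ∈ candsIn C hn t u a b ↔
      ExplCand C hn t u x ∧ a ≤ alpha (C.V u) (C.V x) ∧ alpha (C.V u) (C.V x) < b := by
  simp [candsIn]

lemma isChild_of_mem_candsIn {u x : Fin n} {a b : ℝ} (hx : x ∈ candsIn C hn t u a b) :
    v₁ hn < x ∧ parent C hn x = u := by
  obtain ⟨hv, -, hpar⟩ := explCand_iff.mp (mem_candsIn.mp hx).1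
  exact ⟨hv, hpar⟩

lemma sum_card_subtree_candsIn_lt (u : Fin n) (a b : ℝ) :
    ∑ y ∈ candsIn C hn t u a b, #(subtree C hn y) < #(subtree C hn u) :=
  sum_card_subtree_lt _ fun _ => isChild_of_mem_candsIn

lemma sum_card_subtree_candsIn_add_lt {u x : Fin n} (a b : ℝ)
    (hx : ExplCand C hn t u x) (hbx : b ≤ alpha (C.V u) (C.V x)) :
    ∑ y ∈ candsIn C hn t u a b, #(subtree C hn y) + #(subtree C hn x) < #(subtree C hn u) := by
  classical
  have hxS : x ∉ candsIn C hn t u a b := fun h => (mem_candsIn.mp h).2.2.not_ge hbx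
  have := sum_card_subtree_lt (insert x (candsIn C hn t u a b)) fun y hy => by
    rcases mem_insert.mp hy with rfl | hy
    · obtain ⟨hv, -, hpar⟩ := explCand_iff.mp hx
      exact ⟨hv, hpar⟩
    · exact isChild_of_mem_candsIn hy
  rwa [sum_insert hxS, add_comm] at this

variable (C hn t) in
def AupTour (u : Fin n) (p : Option (Fin n)) : Prop :=
  ∃ m < 2 * #(subtree C hn u),
    RelPath (AupStep C hn t) m (u, p, true) (parent C hn u, some u, false)

/-- Entered at the candidate `r`, `A^up` tours the subtrees of the candidates of `u` with angle
in `[α r, γ)` in increasing order of angle (one per angle), then stands at `u` ready to leave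
the window. -/
theorem exists_aupPath_sweep {u : Fin n} (hut : u ≠ t) {γ : ℝ}
    (htour : ∀ c, ExplCand C hn t u c → alpha (C.V u) (C.V c) < γ →
      AupTour C hn t c (some u))
    (r : Fin n) (hr : ExplCand C hn t u r) (hrγ : alpha (C.V u) (C.V r) < γ) :
    ∃ q, alpha (C.V u) (C.V q) < γ ∧
      (∀ c, ExplCand C hn t u c → alpha (C.V u) (C.V q) < alpha (C.V u) (C.V c) →
        γ ≤ alpha (C.V u) (C.V c)) ∧
      ∃ m < 2 * ∑ y ∈ candsIn C hn t u (alpha (C.V u) (C.V r)) γ, #(subtree C hn y),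
        RelPath (AupStep C hn t) m (r, some u, true) (u, some q, false) := by
  obtain ⟨m₁, hm₁, hpath₁⟩ := htour r hr hrγ
  rw [(explCand_iff.mp hr).2.2] at hpath₁
  have hrS : r ∈ candsIn C hn t u (alpha (C.V u) (C.V r)) γ :=
    mem_candsIn.mpr ⟨hr, le_rfl, hrγ⟩
  by_cases hnext : ∃ c, ExplCand C hn t u c ∧
      alpha (C.V u) (C.V r) < alpha (C.V u) (C.V c) ∧ alpha (C.V u) (C.V c) < γ
  · obtain ⟨c₀, hc₀, hc₀r, hc₀γ⟩ := hnext
    obtain ⟨c, ⟨hc, hcr⟩, hcmin⟩ := exists_min_alpha C u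
      (P := fun c => ExplCand C hn t u c ∧ alpha (C.V u) (C.V r) < alpha (C.V u) (C.V c))
      ⟨c₀, hc₀, hc₀r⟩
    have hcγ := (hcmin c₀ ⟨hc₀, hc₀r⟩).trans_lt hc₀γ
    have hrS' : r ∉ candsIn C hn t u (alpha (C.V u) (C.V c)) γ :=
      fun h => (mem_candsIn.mp h).2.1.not_gt hcr
    have hsplit : insert r (candsIn C hn t u (alpha (C.V u) (C.V c)) γ) ⊆
        candsIn C hn t u (alpha (C.V u) (C.V r)) γ := by
      refine insert_subset hrS fun y hy => ?_
      obtain ⟨hy, hcy, hyγ⟩ := mem_candsIn.mp hy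
      exact mem_candsIn.mpr ⟨hy, hcr.le.trans hcy, hyγ⟩
    obtain ⟨q, hqγ, hqmax, m₂, hm₂, hpath₂⟩ := exists_aupPath_sweep hut htour c hc hcγ
    have hstep := aupStep_explore_next hut hc hcr fun v hv hrv => hcmin v ⟨hv, hrv⟩
    refine ⟨q, hqγ, hqmax, m₁ + 1 + m₂, ?_,
      (hpath₁.trans (.single hstep)).trans hpath₂⟩
    have := sum_le_sum_of_subset (f := fun y => #(subtree C hn y)) hsplit
    rw [sum_insert hrS'] at this
    omega
  · push Not at hnext
    have := single_le_sum (f := fun y => #(subtree C hn y)) (fun _ _ => Nat.zero_le _) hrS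
    exact ⟨r, hrγ, hnext, m₁, by omega, hpath₁⟩
termination_by #(candsIn C hn t u (alpha (C.V u) (C.V r)) γ)
decreasing_by exact card_lt_card ((ssubset_insert hrS').trans_subset hsplit)

theorem aupTour_of_not_mem_subtree (u : Fin n) (hu : v₁ hn < u) (ht : t ∉ subtree C hn u)
    (p : Option (Fin n)) : AupTour C hn t u p := by
  induction u using WellFoundedGT.induction generalizing p with
  | ind u ih =>
  have hut : u ≠ t := fun h => ht (h ▸ mem_subtree_self u)
  by_cases hcand : ∃ c, ExplCand C hn t u c
  · obtain ⟨c, hc, hcmin⟩ := exists_min_alpha C u hcand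
    have htour (c : Fin n) (hc : ExplCand C hn t u c) : AupTour C hn t c (some u) := by
      obtain ⟨hc0, -, hcu⟩ := explCand_iff.mp hc
      have htc : t ∉ subtree C hn c := fun h => ht (hcu ▸ subtree_subset_subtree_parent c h)
      exact ih c (hcu ▸ parent_lt hc0) hc0 htc _
    obtain ⟨q, -, hqmax, m, hm, hpath⟩ :=
      exists_aupPath_sweep hut (fun c hc _ => htour c hc) c hc (alpha_lt_two_pi _ _)
    have hfirst := aupStep_explore_first (p := p) hut hc hcmin
    have hlast := aupStep_route_of_no_next hut hu fun v hv =>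
      not_lt.mp fun h => (hqmax v hv h).not_gt (alpha_lt_two_pi _ _)
    refine ⟨1 + m + 1, ?_, ((RelPath.single hfirst).trans hpath).trans (.single hlast)⟩
    have := sum_card_subtree_candsIn_lt (C := C) (hn := hn) (t := t) u
      (alpha (C.V u) (C.V c)) (2 * Real.pi)
    omega
  · push Not at hcand
    have := card_pos.mpr ⟨u, mem_subtree_self (C := C) (hn := hn) u⟩
    exact ⟨1, by omega, .single (aupStep_route_of_no_cand hut hu hcand)⟩

theorem exists_aupPath_to_target (u : Fin n) (ht : t ∈ subtree C hn u) (p : Option (Fin n)) :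
    ∃ m < 2 * #(subtree C hn u),
      ∃ s, RelPath (AupStep C hn t) m (u, p, true) s ∧ s.1 = t := by
  induction u using WellFoundedGT.induction generalizing p with
  | ind u ih =>
  by_cases htu : t = u
  · have := card_pos.mpr ⟨u, mem_subtree_self (C := C) (hn := hn) u⟩
    exact ⟨0, by omega, _, .refl _, htu.symm⟩
  have hut : u ≠ t := Ne.symm htu
  obtain ⟨x, hx0, hxu, htx⟩ := exists_child_mem_subtree ht htu
  have hx : ExplCand C hn t u x := explCand_iff.mpr ⟨hx0, le_of_mem_subtree htx, hxu⟩
  obtain ⟨m₂, hm₂, s, hpath₂, hs⟩ := ih x (hxu ▸ parent_lt hx0) htx (some u)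
  -- `AupStep` may pick any candidate of minimal angle, in particular `x` among those tied with it
  by_cases hbefore : ∃ c, ExplCand C hn t u c ∧ alpha (C.V u) (C.V c) < alpha (C.V u) (C.V x)
  · obtain ⟨c, hc, hcmin⟩ := exists_min_alpha C u ⟨x, hx⟩
    obtain ⟨c₀, hc₀, hc₀x⟩ := hbefore
    have hcx := (hcmin c₀ hc₀).trans_lt hc₀x
    have htour (c : Fin n) (hc : ExplCand C hn t u c)
        (hcx : alpha (C.V u) (C.V c) < alpha (C.V u) (C.V x)) : AupTour C hn t c (some u) := by
      obtain ⟨hc0, -, hcu⟩ := explCand_iff.mp hc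
      have hne : c ≠ x := by rintro rfl; exact lt_irrefl _ hcx
      have htc : t ∉ subtree C hn c := fun h =>
        disjoint_left.mp (disjoint_subtree hc0 hx0 (hcu.trans hxu.symm) hne) h htx
      exact aupTour_of_not_mem_subtree c hc0 htc _
    obtain ⟨q, hqx, hqmax, m₁, hm₁, hpath₁⟩ := exists_aupPath_sweep hut htour c hc hcx
    have hfirst := aupStep_explore_first (p := p) hut hc hcmin
    have hnext := aupStep_explore_next hut hx hqx hqmax
    refine ⟨1 + m₁ + 1 + m₂, ?_, s,
      (((RelPath.single hfirst).trans hpath₁).trans (.single hnext)).trans hpath₂, hs⟩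
    have := sum_card_subtree_candsIn_add_lt (alpha (C.V u) (C.V c)) _ hx le_rfl
    omega
  · push Not at hbefore
    have := hxu ▸ card_subtree_lt_parent (C := C) hx0
    have hfirst := aupStep_explore_first (p := p) hut hx hbefore
    exact ⟨1 + m₂, by omega, s, (RelPath.single hfirst).trans hpath₂, hs⟩

end Ascent

section Descent

variable {k n : ℕ} {C : Config k n} {hn : 0 < n}

lemma exists_adownStep {u : Fin n} (hu : v₁ hn < u) : ∃ v, AdownStep C u v := by
  obtain ⟨v, ⟨hadj, hvu⟩, hmin⟩ := Set.exists_min_image {v | (graph C).Adj u v ∧ v < u} id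
    (Set.toFinite _) ⟨parent C hn u, adj_parent hu, parent_lt hu⟩
  exact ⟨v, hadj, hvu, fun v' h₁ h₂ => hmin v' ⟨h₁, h₂⟩⟩

theorem exists_adownPath (s : Fin n) :
    ∃ m ≤ (s : ℕ), RelPath (fun a b => a ≠ v₁ hn ∧ AdownStep C a b) m s (v₁ hn) := by
  induction s using WellFoundedLT.induction with
  | ind s ih =>
  rcases (v₁_le hn s).lt_or_eq with hs | rfl
  · obtain ⟨v, hv⟩ := exists_adownStep (C := C) hs
    obtain ⟨m, hm, hpath⟩ := ih v hv.2.1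
    have := Fin.lt_def.mp hv.2.1
    exact ⟨1 + m, by omega, (RelPath.single ⟨hs.ne', hv⟩).trans hpath⟩
  · exact ⟨0, Nat.zero_le _, .refl _⟩

end Descent

/-- In an ordered Θ_k-graph on `n` vertices, for every source
`s` and destination `t`: (1) the descending walk of `A^down` starting at `s`
reaches `v₁` in at most `n - 1` hops; (2) the state sequence of `A^up(v₁, t)`
reaches a state whose current vertex is `t` after some `m ≤ 2n` steps; hence
the two-phase algorithm `A(s, t)` routes from `s` to `t` in at most `3n`
hops. -/
theorem algorithm_A_routes {k n : ℕ} (C : Config k n) (hn : 0 < n)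
    (s t : Fin n) :
    ∃ m₁ ≤ n - 1, ∃ w : ℕ → Fin n,
      w 0 = s ∧ w m₁ = ⟨0, hn⟩ ∧
      (∀ j < m₁, w j ≠ ⟨0, hn⟩ ∧ AdownStep C (w j) (w (j + 1))) ∧
      ∃ m₂ ≤ 2 * n, ∃ σ : ℕ → Fin n × Option (Fin n) × Bool,
        σ 0 = (⟨0, hn⟩, none, true) ∧
        (∀ i < m₂, AupStep C hn t (σ i) (σ (i + 1))) ∧
        (σ m₂).1 = t ∧ m₁ + m₂ ≤ 3 * n := by
  obtain ⟨m₁, hm₁, w, hw0, hwm, hw⟩ := exists_adownPath (C := C) (hn := hn) s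
  obtain ⟨m₂, hm₂, _, ⟨σ, hσ0, hσm, hσ⟩, hσt⟩ :=
    exists_aupPath_to_target (C := C) (t := t) (v₁ hn) (mem_subtree_v₁ t) none
  have hcard : #(subtree C hn (v₁ hn)) ≤ n := (card_le_univ _).trans_eq (Fintype.card_fin n)
  have := s.isLt
  exact ⟨m₁, by omega, w, hw0, hwm, hw, m₂, by omega, σ, hσ0, hσ, hσm ▸ hσt,
    by omega⟩

end OrderedTheta
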